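/- Let M be a square complex matrix with singular value decomposition M = U D V*. Then for 0 < p < 2 < q, we have ‖M‖_p ≥ ‖D‖_p ≥ ‖D‖_q ≥ ‖M‖_q, where ‖·‖_p denotes the entrywise ℓ_p-norm. -/

import Mathlib

/-!
Since `U` is unitary, the squared norm of the `j`-th column of `M = U D V*` is
`∑ₖ |V_jk|² d_k²`, and the matrix `(|V_jk|²)` is doubly stochastic. For `r ≤ 2`, Jensen's
inequality for the concave map `t ↦ t^(r/2)` along each row of this matrix, summed over the rows
(whose weights add up to 1 in each column), gives `∑ₖ d_k^r ≤ ∑ⱼ ‖M e_j‖^r`, and subadditivity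
of `t ↦ t^(r/2)` bounds the right side by `∑ᵢⱼ |M_ij|^r`. For `r ≥ 2` both inequalities
reverse. The middle inequality is the monotonicity of `ℓ_p` norms in `p`.
-/

noncomputable def singularValues {n : ℕ} (M : Matrix (Fin n) (Fin n) ℂ) : Fin n → ℝ :=
  fun k => Real.sqrt ((Matrix.isHermitian_conjTranspose_mul_self M).eigenvalues k)

noncomputable def lpNorm {n : ℕ} (p : ℝ) (X : Matrix (Fin n) (Fin n) ℂ) : ℝ :=
  (∑ i, ∑ j, (‖X i j‖) ^ p) ^ ((1 : ℝ) / p)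

open Finset Matrix

namespace Real

variable {ι : Type*} {s : Finset ι} {f : ι → ℝ} {p q : ℝ}

theorem sum_rpow_le_rpow_sum (hf : ∀ i ∈ s, 0 ≤ f i) (hp : 1 ≤ p) :
    ∑ i ∈ s, f i ^ p ≤ (∑ i ∈ s, f i) ^ p := by
  induction s using Finset.cons_induction with
  | empty => simp [zero_rpow (zero_lt_one.trans_le hp).ne']
  | cons a s _ ih =>
    rw [forall_mem_cons] at hf
    rw [sum_cons, sum_cons]
    calc f a ^ p + ∑ i ∈ s, f i ^ p ≤ f a ^ p + (∑ i ∈ s, f i) ^ p := by grw [ih hf.2]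
      _ ≤ _ := add_rpow_le_rpow_add hf.1 (sum_nonneg hf.2) hp

theorem rpow_sum_le_sum_rpow (hf : ∀ i ∈ s, 0 ≤ f i) (hp0 : 0 < p) (hp1 : p ≤ 1) :
    (∑ i ∈ s, f i) ^ p ≤ ∑ i ∈ s, f i ^ p :=
  le_sum_of_subadditive_on_pred (· ^ p) (0 ≤ ·) (zero_rpow hp0.ne').le
    (fun _ _ hx hy => rpow_add_le_add_rpow hx hy hp0.le hp1) (fun _ _ => add_nonneg) f hf

theorem rpow_sum_rpow_le (hf : ∀ i ∈ s, 0 ≤ f i) (hp : 0 < p) (hpq : p ≤ q) :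
    (∑ i ∈ s, f i ^ q) ^ (1 / q) ≤ (∑ i ∈ s, f i ^ p) ^ (1 / p) := by
  have hq : 0 < q := hp.trans_le hpq
  have hsum : 0 ≤ ∑ i ∈ s, f i ^ p := sum_nonneg fun i hi => rpow_nonneg (hf i hi) p
  have hsum_q : ∑ i ∈ s, f i ^ q ≤ (∑ i ∈ s, f i ^ p) ^ (q / p) :=
    calc ∑ i ∈ s, f i ^ q = ∑ i ∈ s, (f i ^ p) ^ (q / p) := sum_congr rfl fun i hi => by
          rw [← rpow_mul (hf i hi), mul_div_cancel₀ _ hp.ne']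
      _ ≤ _ := sum_rpow_le_rpow_sum (fun i hi => rpow_nonneg (hf i hi) p)
          ((one_le_div hp).2 hpq)
  calc (∑ i ∈ s, f i ^ q) ^ (1 / q) ≤ ((∑ i ∈ s, f i ^ p) ^ (q / p)) ^ (1 / q) :=
        rpow_le_rpow (sum_nonneg fun i hi => rpow_nonneg (hf i hi) q) hsum_q (by positivity)
    _ = _ := by rw [← rpow_mul hsum]; field_simp

theorem sq_rpow_div_two {x : ℝ} (hx : 0 ≤ x) (r : ℝ) : (x ^ 2) ^ (r / 2) = x ^ r := by
  rw [← rpow_natCast_mul hx, Nat.cast_ofNat, mul_div_cancel₀ r two_ne_zero]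

end Real

section DoublyStochastic

variable {n : Type*} [Fintype n] [DecidableEq n] {s : Set ℝ} {φ : ℝ → ℝ} {w : Matrix n n ℝ}
  {y : n → ℝ}

theorem ConvexOn.sum_map_mulVec_le_sum_map (hφ : ConvexOn ℝ s φ)
    (hw : w ∈ doublyStochastic ℝ n) (hy : ∀ k, y k ∈ s) :
    ∑ j, φ ((w *ᵥ y) j) ≤ ∑ k, φ (y k) :=
  calc ∑ j, φ ((w *ᵥ y) j) ≤ ∑ j, (w *ᵥ (φ ∘ y)) j := sum_le_sum fun j _ =>
        hφ.map_sum_le (fun _ _ => nonneg_of_mem_doublyStochastic hw)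
          (sum_row_of_mem_doublyStochastic hw j) (fun k _ => hy k)
    _ = ∑ k, φ (y k) := sum_mulVec_of_mem_doublyStochastic hw

theorem ConcaveOn.sum_map_le_sum_map_mulVec (hφ : ConcaveOn ℝ s φ)
    (hw : w ∈ doublyStochastic ℝ n) (hy : ∀ k, y k ∈ s) :
    ∑ k, φ (y k) ≤ ∑ j, φ ((w *ᵥ y) j) := by
  simpa using hφ.neg.sum_map_mulVec_le_sum_map hw hy

end DoublyStochastic

namespace Matrix

variable {𝕜 : Type*} [RCLike 𝕜] {m n : Type*} [Fintype m]

noncomputable def entrywiseNormSq (A : Matrix m n 𝕜) : Matrix m n ℝ :=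
  of fun i j => ‖A i j‖ ^ 2

theorem ofReal_sum_norm_sq_eq_conjTranspose_mul_self_apply (A : Matrix m n 𝕜) (j : n) :
    ((∑ i, ‖A i j‖ ^ 2 : ℝ) : 𝕜) = (Aᴴ * A) j j := by
  simp [Matrix.mul_apply, RCLike.conj_mul]

theorem sum_norm_diagonal_rpow [DecidableEq m] (σ : m → 𝕜) {r : ℝ} (hr : r ≠ 0) :
    ∑ i, ∑ j, ‖diagonal σ i j‖ ^ r = ∑ k, ‖σ k‖ ^ r := by
  simp [diagonal_apply, apply_ite, Real.zero_rpow hr]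

variable [DecidableEq m] {U V : Matrix m m 𝕜}

theorem sum_norm_unitary_mul_apply_sq (hU : U ∈ unitaryGroup m 𝕜) (A : Matrix m n 𝕜) (j : n) :
    ∑ i, ‖(U * A) i j‖ ^ 2 = ∑ i, ‖A i j‖ ^ 2 := by
  apply RCLike.ofReal_injective (K := 𝕜)
  rw [ofReal_sum_norm_sq_eq_conjTranspose_mul_self_apply,
    ofReal_sum_norm_sq_eq_conjTranspose_mul_self_apply, conjTranspose_mul, Matrix.mul_assoc,
    ← Matrix.mul_assoc Uᴴ, ← star_eq_conjTranspose, mem_unitaryGroup_iff'.1 hU, Matrix.one_mul]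

theorem entrywiseNormSq_mem_doublyStochastic (hV : V ∈ unitaryGroup m 𝕜) :
    entrywiseNormSq V ∈ doublyStochastic ℝ m := by
  have hcol (W : Matrix m m 𝕜) (hW : W ∈ unitaryGroup m 𝕜) (k : m) : ∑ j, ‖W j k‖ ^ 2 = 1 := by
    apply RCLike.ofReal_injective (K := 𝕜)
    rw [ofReal_sum_norm_sq_eq_conjTranspose_mul_self_apply, ← star_eq_conjTranspose,
      mem_unitaryGroup_iff'.1 hW]
    simp
  refine mem_doublyStochastic_iff_sum.2 ⟨fun _ _ => sq_nonneg _, fun j => ?_, hcol V hV⟩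
  simpa [entrywiseNormSq] using hcol Vᴴ (Unitary.star_mem hV) j

theorem sum_norm_unitary_mul_diagonal_mul_apply_sq (hU : U ∈ unitaryGroup m 𝕜) (σ : m → 𝕜)
    (j : m) :
    ∑ i, ‖(U * diagonal σ * Vᴴ) i j‖ ^ 2 = (entrywiseNormSq V *ᵥ fun k => ‖σ k‖ ^ 2) j := by
  rw [Matrix.mul_assoc, sum_norm_unitary_mul_apply_sq hU]
  simp [entrywiseNormSq, mulVec, dotProduct, diagonal_mul, mul_pow, mul_comm]

theorem sum_norm_rpow_le_sum_norm_rpow_unitary_mul_diagonal_mul (hU : U ∈ unitaryGroup m 𝕜)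
    (hV : V ∈ unitaryGroup m 𝕜) (σ : m → 𝕜) {r : ℝ} (hr0 : 0 < r) (hr2 : r ≤ 2) :
    ∑ k, ‖σ k‖ ^ r ≤ ∑ i, ∑ j, ‖(U * diagonal σ * Vᴴ) i j‖ ^ r := by
  set M := U * diagonal σ * Vᴴ
  calc ∑ k, ‖σ k‖ ^ r = ∑ k, (‖σ k‖ ^ 2) ^ (r / 2) := by
        simp only [Real.sq_rpow_div_two (norm_nonneg _)]
    _ ≤ ∑ j, ((entrywiseNormSq V *ᵥ fun k => ‖σ k‖ ^ 2) j) ^ (r / 2) :=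
        (Real.concaveOn_rpow (by positivity) (by linarith)).sum_map_le_sum_map_mulVec
          (entrywiseNormSq_mem_doublyStochastic hV) fun _ => Set.mem_Ici.2 (sq_nonneg _)
    _ = ∑ j, (∑ i, ‖M i j‖ ^ 2) ^ (r / 2) := by
        simp only [sum_norm_unitary_mul_diagonal_mul_apply_sq hU, M]
    _ ≤ ∑ j, ∑ i, (‖M i j‖ ^ 2) ^ (r / 2) := sum_le_sum fun j _ =>
        Real.rpow_sum_le_sum_rpow (fun _ _ => sq_nonneg _) (by positivity) (by linarith)
    _ = ∑ i, ∑ j, ‖M i j‖ ^ r := by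
        simp only [Real.sq_rpow_div_two (norm_nonneg _)]
        exact sum_comm

theorem sum_norm_rpow_unitary_mul_diagonal_mul_le_sum_norm_rpow (hU : U ∈ unitaryGroup m 𝕜)
    (hV : V ∈ unitaryGroup m 𝕜) (σ : m → 𝕜) {r : ℝ} (hr : 2 ≤ r) :
    ∑ i, ∑ j, ‖(U * diagonal σ * Vᴴ) i j‖ ^ r ≤ ∑ k, ‖σ k‖ ^ r := by
  set M := U * diagonal σ * Vᴴ
  calc ∑ i, ∑ j, ‖M i j‖ ^ r = ∑ j, ∑ i, (‖M i j‖ ^ 2) ^ (r / 2) := by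
        simp only [Real.sq_rpow_div_two (norm_nonneg _)]
        exact sum_comm
    _ ≤ ∑ j, (∑ i, ‖M i j‖ ^ 2) ^ (r / 2) := sum_le_sum fun j _ =>
        Real.sum_rpow_le_rpow_sum (fun _ _ => sq_nonneg _) (by linarith)
    _ = ∑ j, ((entrywiseNormSq V *ᵥ fun k => ‖σ k‖ ^ 2) j) ^ (r / 2) := by
        simp only [sum_norm_unitary_mul_diagonal_mul_apply_sq hU, M]
    _ ≤ ∑ k, (‖σ k‖ ^ 2) ^ (r / 2) :=
        (convexOn_rpow (by linarith)).sum_map_mulVec_le_sum_map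
          (entrywiseNormSq_mem_doublyStochastic hV) fun _ => Set.mem_Ici.2 (sq_nonneg _)
    _ = ∑ k, ‖σ k‖ ^ r := by
        simp only [Real.sq_rpow_div_two (norm_nonneg _)]

end Matrix

section lpNorm

variable {n : ℕ} {p q : ℝ} {U V : Matrix (Fin n) (Fin n) ℂ}

theorem lpNorm_le_lpNorm_of_le (hp : 0 < p) (hpq : p ≤ q) (X : Matrix (Fin n) (Fin n) ℂ) :
    lpNorm q X ≤ lpNorm p X := by
  simp only [lpNorm, ← Fintype.sum_prod_type']
  exact Real.rpow_sum_rpow_le (fun _ _ => norm_nonneg _) hp hpq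

theorem lpNorm_diagonal_le_lpNorm_unitary_mul_diagonal_mul (hU : U ∈ unitaryGroup (Fin n) ℂ)
    (hV : V ∈ unitaryGroup (Fin n) ℂ) (σ : Fin n → ℂ) (hp0 : 0 < p) (hp2 : p ≤ 2) :
    lpNorm p (diagonal σ) ≤ lpNorm p (U * diagonal σ * Vᴴ) := by
  unfold lpNorm
  rw [sum_norm_diagonal_rpow σ hp0.ne']
  gcongr ?_ ^ _
  exact sum_norm_rpow_le_sum_norm_rpow_unitary_mul_diagonal_mul hU hV σ hp0 hp2

theorem lpNorm_unitary_mul_diagonal_mul_le_lpNorm_diagonal (hU : U ∈ unitaryGroup (Fin n) ℂ)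
    (hV : V ∈ unitaryGroup (Fin n) ℂ) (σ : Fin n → ℂ) (hq : 2 ≤ q) :
    lpNorm q (U * diagonal σ * Vᴴ) ≤ lpNorm q (diagonal σ) := by
  unfold lpNorm
  rw [sum_norm_diagonal_rpow σ (by positivity)]
  gcongr ?_ ^ _
  exact sum_norm_rpow_unitary_mul_diagonal_mul_le_sum_norm_rpow hU hV σ hq

end lpNorm

theorem duality_gap {n : ℕ} (M U V D : Matrix (Fin n) (Fin n) ℂ)
    (hU : U ∈ Matrix.unitaryGroup (Fin n) ℂ)
    (hV : V ∈ Matrix.unitaryGroup (Fin n) ℂ)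
    (hD : D = Matrix.diagonal (fun k => (singularValues M k : ℂ)))
    (hM : M = U * D * V.conjTranspose)
    (p q : ℝ) (hp0 : 0 < p) (hp2 : p < 2) (hq : 2 < q) :
    lpNorm p M ≥ lpNorm p D ∧ lpNorm p D ≥ lpNorm q D ∧ lpNorm q D ≥ lpNorm q M := by
  rw [hM, hD]
  exact ⟨lpNorm_diagonal_le_lpNorm_unitary_mul_diagonal_mul hU hV _ hp0 hp2.le,
    lpNorm_le_lpNorm_of_le hp0 (by linarith) _,
    lpNorm_unitary_mul_diagonal_mul_le_lpNorm_diagonal hU hV _ hq.le⟩
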